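/- In the braid group B4, with x = σ2σ1²σ2 and y = σ3, the following relations hold: σ1 commutes with x, σ1 commutes with y, xyxy = yxyx, and (xyxy)σ1² = Δ4², where Δ4 = σ1σ2σ1σ3σ2σ1. -/
import Mathlib


open FreeGroup

/-- The defining relations of the braid group `B₄`. -/
def B4rels : Set (FreeGroup (Fin 3)) :=
  {of 0 * of 1 * of 0 * (of 1 * of 0 * of 1)⁻¹,
   of 1 * of 2 * of 1 * (of 2 * of 1 * of 2)⁻¹,
   of 0 * of 2 * (of 2 * of 0)⁻¹}

/-- The braid group on four strands. -/
abbrev B4 := PresentedGroup B4rels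

def σ₁ : B4 := PresentedGroup.of 0
def σ₂ : B4 := PresentedGroup.of 1
def σ₃ : B4 := PresentedGroup.of 2

/-- `x = σ₂σ₁²σ₂`. -/
def x : B4 := σ₂ * σ₁ ^ 2 * σ₂
/-- `y = σ₃`. -/
def y : B4 := σ₃
/-- The half-twist `Δ₄ = σ₁σ₂σ₁σ₃σ₂σ₁`. -/
def Δ₄ : B4 := σ₁ * σ₂ * σ₁ * σ₃ * σ₂ * σ₁

/-- Each defining relator is trivial in `B₄`. -/
lemma relation_one (r : FreeGroup (Fin 3)) (hr : r ∈ B4rels) :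
    (QuotientGroup.mk r : B4) = 1 :=
  (QuotientGroup.eq_one_iff r).2 (Subgroup.subset_normalClosure hr)

lemma rel1 : σ₁ * σ₂ * σ₁ = σ₂ * σ₁ * σ₂ := by
  have h : σ₁ * σ₂ * σ₁ * (σ₂ * σ₁ * σ₂)⁻¹ = 1 :=
    relation_one (of 0 * of 1 * of 0 * (of 1 * of 0 * of 1)⁻¹) (by left; rfl)
  exact mul_inv_eq_one.mp h

lemma rel2 : σ₂ * σ₃ * σ₂ = σ₃ * σ₂ * σ₃ := by
  have h : σ₂ * σ₃ * σ₂ * (σ₃ * σ₂ * σ₃)⁻¹ = 1 :=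
    relation_one (of 1 * of 2 * of 1 * (of 2 * of 1 * of 2)⁻¹) (by right; left; rfl)
  exact mul_inv_eq_one.mp h

lemma rel3 : σ₁ * σ₃ = σ₃ * σ₁ := by
  have h : σ₁ * σ₃ * (σ₃ * σ₁)⁻¹ = 1 :=
    relation_one (of 0 * of 2 * (of 2 * of 0)⁻¹) (by right; right; rfl)
  exact mul_inv_eq_one.mp h

lemma R1 (t : B4) : σ₁ * (σ₂ * (σ₁ * t)) = σ₂ * (σ₁ * (σ₂ * t)) := by
  rw [← mul_assoc, ← mul_assoc, rel1, mul_assoc, mul_assoc]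
lemma R1s (t : B4) : σ₂ * (σ₁ * (σ₂ * t)) = σ₁ * (σ₂ * (σ₁ * t)) := (R1 t).symm
lemma R2 (t : B4) : σ₂ * (σ₃ * (σ₂ * t)) = σ₃ * (σ₂ * (σ₃ * t)) := by
  rw [← mul_assoc, ← mul_assoc, rel2, mul_assoc, mul_assoc]
lemma R2s (t : B4) : σ₃ * (σ₂ * (σ₃ * t)) = σ₂ * (σ₃ * (σ₂ * t)) := (R2 t).symm
lemma R3 (t : B4) : σ₁ * (σ₃ * t) = σ₃ * (σ₁ * t) := by
  rw [← mul_assoc, rel3, mul_assoc]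
lemma R3s (t : B4) : σ₃ * (σ₁ * t) = σ₁ * (σ₃ * t) := (R3 t).symm
lemma R1e : σ₁ * (σ₂ * σ₁) = σ₂ * (σ₁ * σ₂) := by
  rw [← mul_assoc, rel1, mul_assoc]
lemma R1se : σ₂ * (σ₁ * σ₂) = σ₁ * (σ₂ * σ₁) := R1e.symm
lemma R2e : σ₂ * (σ₃ * σ₂) = σ₃ * (σ₂ * σ₃) := by
  rw [← mul_assoc, rel2, mul_assoc]
lemma R2se : σ₃ * (σ₂ * σ₃) = σ₂ * (σ₃ * σ₂) := R2e.symm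
lemma R3e : σ₁ * σ₃ = σ₃ * σ₁ := rel3
lemma R3se : σ₃ * σ₁ = σ₁ * σ₃ := rel3.symm

lemma key1 : σ₁ * (σ₂ * (σ₁ * (σ₁ * (σ₂)))) = σ₂ * (σ₁ * (σ₁ * (σ₂ * (σ₁)))) := by
  calc σ₁ * (σ₂ * (σ₁ * (σ₁ * (σ₂))))
    _ = σ₂ * (σ₁ * (σ₂ * (σ₁ * (σ₂)))) := by exact R1 _
    _ = σ₂ * (σ₁ * (σ₁ * (σ₂ * (σ₁)))) := by congr 1; congr 1; exact R1se

lemma key3 : σ₂ * (σ₁ * (σ₁ * (σ₂ * (σ₃ * (σ₂ * (σ₁ * (σ₁ * (σ₂ * (σ₃))))))))) = σ₃ * (σ₂ * (σ₁ * (σ₁ * (σ₂ * (σ₃ * (σ₂ * (σ₁ * (σ₁ * (σ₂))))))))) := by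
  calc σ₂ * (σ₁ * (σ₁ * (σ₂ * (σ₃ * (σ₂ * (σ₁ * (σ₁ * (σ₂ * (σ₃)))))))))
    _ = σ₂ * (σ₁ * (σ₁ * (σ₃ * (σ₂ * (σ₃ * (σ₁ * (σ₁ * (σ₂ * (σ₃))))))))) := by congr 1; congr 1; congr 1; exact R2 _
    _ = σ₂ * (σ₁ * (σ₃ * (σ₁ * (σ₂ * (σ₃ * (σ₁ * (σ₁ * (σ₂ * (σ₃))))))))) := by congr 1; congr 1; exact R3 _
    _ = σ₂ * (σ₃ * (σ₁ * (σ₁ * (σ₂ * (σ₃ * (σ₁ * (σ₁ * (σ₂ * (σ₃))))))))) := by congr 1; exact R3 _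
    _ = σ₂ * (σ₃ * (σ₁ * (σ₁ * (σ₂ * (σ₁ * (σ₃ * (σ₁ * (σ₂ * (σ₃))))))))) := by congr 1; congr 1; congr 1; congr 1; congr 1; exact R3s _
    _ = σ₂ * (σ₃ * (σ₁ * (σ₂ * (σ₁ * (σ₂ * (σ₃ * (σ₁ * (σ₂ * (σ₃))))))))) := by congr 1; congr 1; congr 1; exact R1 _
    _ = σ₂ * (σ₃ * (σ₂ * (σ₁ * (σ₂ * (σ₂ * (σ₃ * (σ₁ * (σ₂ * (σ₃))))))))) := by congr 1; congr 1; exact R1 _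
    _ = σ₃ * (σ₂ * (σ₃ * (σ₁ * (σ₂ * (σ₂ * (σ₃ * (σ₁ * (σ₂ * (σ₃))))))))) := by exact R2 _
    _ = σ₃ * (σ₂ * (σ₁ * (σ₃ * (σ₂ * (σ₂ * (σ₃ * (σ₁ * (σ₂ * (σ₃))))))))) := by congr 1; congr 1; exact R3s _
    _ = σ₃ * (σ₂ * (σ₁ * (σ₃ * (σ₂ * (σ₂ * (σ₁ * (σ₃ * (σ₂ * (σ₃))))))))) := by congr 1; congr 1; congr 1; congr 1; congr 1; congr 1; exact R3s _
    _ = σ₃ * (σ₂ * (σ₁ * (σ₃ * (σ₂ * (σ₂ * (σ₁ * (σ₂ * (σ₃ * (σ₂))))))))) := by congr 1; congr 1; congr 1; congr 1; congr 1; congr 1; congr 1; exact R2se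
    _ = σ₃ * (σ₂ * (σ₁ * (σ₃ * (σ₂ * (σ₁ * (σ₂ * (σ₁ * (σ₃ * (σ₂))))))))) := by congr 1; congr 1; congr 1; congr 1; congr 1; exact R1s _
    _ = σ₃ * (σ₂ * (σ₁ * (σ₃ * (σ₁ * (σ₂ * (σ₁ * (σ₁ * (σ₃ * (σ₂))))))))) := by congr 1; congr 1; congr 1; congr 1; exact R1s _
    _ = σ₃ * (σ₂ * (σ₁ * (σ₃ * (σ₁ * (σ₂ * (σ₁ * (σ₃ * (σ₁ * (σ₂))))))))) := by congr 1; congr 1; congr 1; congr 1; congr 1; congr 1; congr 1; exact R3 _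
    _ = σ₃ * (σ₂ * (σ₁ * (σ₃ * (σ₁ * (σ₂ * (σ₃ * (σ₁ * (σ₁ * (σ₂))))))))) := by congr 1; congr 1; congr 1; congr 1; congr 1; congr 1; exact R3 _
    _ = σ₃ * (σ₂ * (σ₁ * (σ₁ * (σ₃ * (σ₂ * (σ₃ * (σ₁ * (σ₁ * (σ₂))))))))) := by congr 1; congr 1; congr 1; exact R3s _
    _ = σ₃ * (σ₂ * (σ₁ * (σ₁ * (σ₂ * (σ₃ * (σ₂ * (σ₁ * (σ₁ * (σ₂))))))))) := by congr 1; congr 1; congr 1; congr 1; exact R2s _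

lemma key4 : σ₂ * (σ₁ * (σ₁ * (σ₂ * (σ₃ * (σ₂ * (σ₁ * (σ₁ * (σ₂ * (σ₃ * (σ₁ * (σ₁))))))))))) = σ₁ * (σ₂ * (σ₁ * (σ₃ * (σ₂ * (σ₁ * (σ₁ * (σ₂ * (σ₁ * (σ₃ * (σ₂ * (σ₁))))))))))) := by
  calc σ₂ * (σ₁ * (σ₁ * (σ₂ * (σ₃ * (σ₂ * (σ₁ * (σ₁ * (σ₂ * (σ₃ * (σ₁ * (σ₁)))))))))))
    _ = σ₂ * (σ₁ * (σ₁ * (σ₃ * (σ₂ * (σ₃ * (σ₁ * (σ₁ * (σ₂ * (σ₃ * (σ₁ * (σ₁))))))))))) := by congr 1; congr 1; congr 1; exact R2 _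
    _ = σ₂ * (σ₁ * (σ₃ * (σ₁ * (σ₂ * (σ₃ * (σ₁ * (σ₁ * (σ₂ * (σ₃ * (σ₁ * (σ₁))))))))))) := by congr 1; congr 1; exact R3 _
    _ = σ₂ * (σ₁ * (σ₃ * (σ₁ * (σ₂ * (σ₁ * (σ₃ * (σ₁ * (σ₂ * (σ₃ * (σ₁ * (σ₁))))))))))) := by congr 1; congr 1; congr 1; congr 1; congr 1; exact R3s _
    _ = σ₂ * (σ₁ * (σ₃ * (σ₂ * (σ₁ * (σ₂ * (σ₃ * (σ₁ * (σ₂ * (σ₃ * (σ₁ * (σ₁))))))))))) := by congr 1; congr 1; congr 1; exact R1 _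
    _ = σ₂ * (σ₁ * (σ₃ * (σ₂ * (σ₁ * (σ₂ * (σ₃ * (σ₁ * (σ₂ * (σ₁ * (σ₃ * (σ₁))))))))))) := by congr 1; congr 1; congr 1; congr 1; congr 1; congr 1; congr 1; congr 1; congr 1; exact R3s _
    _ = σ₂ * (σ₁ * (σ₃ * (σ₂ * (σ₁ * (σ₂ * (σ₃ * (σ₂ * (σ₁ * (σ₂ * (σ₃ * (σ₁))))))))))) := by congr 1; congr 1; congr 1; congr 1; congr 1; congr 1; congr 1; exact R1 _
    _ = σ₂ * (σ₁ * (σ₃ * (σ₂ * (σ₁ * (σ₃ * (σ₂ * (σ₃ * (σ₁ * (σ₂ * (σ₃ * (σ₁))))))))))) := by congr 1; congr 1; congr 1; congr 1; congr 1; exact R2 _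
    _ = σ₂ * (σ₁ * (σ₃ * (σ₂ * (σ₃ * (σ₁ * (σ₂ * (σ₃ * (σ₁ * (σ₂ * (σ₃ * (σ₁))))))))))) := by congr 1; congr 1; congr 1; congr 1; exact R3 _
    _ = σ₂ * (σ₁ * (σ₂ * (σ₃ * (σ₂ * (σ₁ * (σ₂ * (σ₃ * (σ₁ * (σ₂ * (σ₃ * (σ₁))))))))))) := by congr 1; congr 1; exact R2s _
    _ = σ₁ * (σ₂ * (σ₁ * (σ₃ * (σ₂ * (σ₁ * (σ₂ * (σ₃ * (σ₁ * (σ₂ * (σ₃ * (σ₁))))))))))) := by exact R1s _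
    _ = σ₁ * (σ₂ * (σ₁ * (σ₃ * (σ₂ * (σ₁ * (σ₂ * (σ₁ * (σ₃ * (σ₂ * (σ₃ * (σ₁))))))))))) := by congr 1; congr 1; congr 1; congr 1; congr 1; congr 1; congr 1; exact R3s _
    _ = σ₁ * (σ₂ * (σ₁ * (σ₃ * (σ₂ * (σ₁ * (σ₂ * (σ₁ * (σ₂ * (σ₃ * (σ₂ * (σ₁))))))))))) := by congr 1; congr 1; congr 1; congr 1; congr 1; congr 1; congr 1; congr 1; exact R2s _
    _ = σ₁ * (σ₂ * (σ₁ * (σ₃ * (σ₂ * (σ₁ * (σ₁ * (σ₂ * (σ₁ * (σ₃ * (σ₂ * (σ₁))))))))))) := by congr 1; congr 1; congr 1; congr 1; congr 1; congr 1; exact R1s _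

/-- In `B₄`: `σ₁` commutes with `x` and with `y`, `xyxy = yxyx`, and
`(xyxy)σ₁² = Δ₄²`. -/
theorem B4_xy_relations :
    σ₁ * x = x * σ₁ ∧
    σ₁ * y = y * σ₁ ∧
    x * y * x * y = y * x * y * x ∧
    (x * y * x * y) * σ₁ ^ 2 = Δ₄ ^ 2 := by
  refine ⟨?_, ?_, ?_, ?_⟩
  · simp only [x, pow_two, mul_assoc]
    exact key1
  · simp only [y]
    exact rel3
  · simp only [x, y, pow_two, mul_assoc]
    exact key3
  · simp only [x, y, Δ₄, pow_two, mul_assoc]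
    exact key4
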